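/- arXiv:2007.01094 — 2 statements merged into one kernel-verified Lean document; each statement's English description precedes it below -/
import Mathlib

section
/- Positive definiteness of the Cherkaev–Gibiansky matrix: Let σ, ζ, ε be real symmetric n×n matrices with λ₁Id ≤ σ + ζ ≤ λ₁⁻¹Id and λ₁Id ≤ σ − ζ ≤ λ₁⁻¹Id for some 0 < λ₁ ≤ 1, and |ε| bounded. Then the 2n×2n real matrix B = [[(σ+ζ)⁻¹, (σ+ζ)⁻¹ε], [ε(σ+ζ)⁻¹, σ−ζ+ε(σ+ζ)⁻¹ε]] is symmetric and positive definite; indeed for X = (p, q)ᵗ ∈ ℝ^{2n}, BX·X = (σ+ζ)⁻¹(p + εq)·(p + εq) + (σ−ζ)q·q. -/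
open MeasureTheory Metric Set
open scoped Pointwise ENNReal Matrix ComplexConjugate
noncomputable section

/-- Euclidean space `ℝ^n`. -/
abbrev Euc (n : ℕ) := EuclideanSpace ℝ (Fin n)

/-- Partial derivative `∂_i f` of a complex valued function. -/
def pd {m : ℕ} (i : Fin m) (f : Euc m → ℂ) (x : Euc m) : ℂ :=
  fderiv ℝ f x (EuclideanSpace.single i 1)

/-- Partial derivative `∂_i f` of a real valued function. -/
def pdR {m : ℕ} (i : Fin m) (f : Euc m → ℝ) (x : Euc m) : ℝ :=
  fderiv ℝ f x (EuclideanSpace.single i 1)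

/-- The `L²(s)` norm of `u`. -/
def l2 {m : ℕ} (u : Euc m → ℂ) (s : Set (Euc m)) : ℝ :=
  Real.sqrt (∫ x in s, ‖u x‖ ^ 2)

/-- A point of `ℝ^{n+1}` from `(x', x_n)`. -/
def emb {n : ℕ} (x' : Euc n) (t : ℝ) : Euc (n+1) :=
  WithLp.toLp 2 (Fin.snoc (α := fun _ => ℝ) (WithLp.ofLp x') t)

/-- The horizontal component `x'` of a point `x = (x', x_n)` of `ℝ^{n+1}`. -/
def low {n : ℕ} (x : Euc (n+1)) : Euc n := WithLp.toLp 2 (fun j : Fin n => x j.castSucc)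

/-- The vertical (last) component `x_n` of a point of `ℝ^{n+1}`. -/
def xlast {n : ℕ} (x : Euc (n+1)) : ℝ := x (Fin.last n)

/-- The upper half space `x_n > 0`. -/
def HPos (n : ℕ) : Set (Euc (n+1)) := {x | 0 < xlast x}

/-- The lower half space `x_n < 0`. -/
def HNeg (n : ℕ) : Set (Euc (n+1)) := {x | xlast x < 0}

/-- `u = H₊ u₊ + H₋ u₋`. -/
def pw {n : ℕ} (up um : Euc (n+1) → ℂ) (x : Euc (n+1)) : ℂ :=
  if 0 < xlast x then up x else if xlast x < 0 then um x else 0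

/-- The matrix `A(x)` is symmetric on `S`. -/
def MatSymmOn {m : ℕ} (A : Euc m → Matrix (Fin m) (Fin m) ℂ) (S : Set (Euc m)) : Prop :=
  ∀ x ∈ S, ∀ l j, A x l j = A x j l

/-- `λ₀ |ξ|² ≤ Re A(x) ξ·ξ ≤ λ₀⁻¹ |ξ|²` on `S`. -/
def ReElliptic {m : ℕ} (A : Euc m → Matrix (Fin m) (Fin m) ℂ) (S : Set (Euc m)) (lam : ℝ) : Prop :=
  ∀ x ∈ S, ∀ ξ : Fin m → ℝ,
    lam * (∑ j, ξ j ^ 2) ≤ ∑ l, ∑ j, (A x l j).re * ξ l * ξ j ∧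
    ∑ l, ∑ j, (A x l j).re * ξ l * ξ j ≤ lam⁻¹ * (∑ j, ξ j ^ 2)

/-- `Im A = γ N` with `λ₀ |ξ|² ≤ N(x) ξ·ξ ≤ λ₀⁻¹ |ξ|²` on `S`. -/
def ImElliptic {m : ℕ} (A : Euc m → Matrix (Fin m) (Fin m) ℂ) (S : Set (Euc m)) (lam gam : ℝ) : Prop :=
  ∀ x ∈ S, ∀ ξ : Fin m → ℝ,
    gam * (lam * (∑ j, ξ j ^ 2)) ≤ ∑ l, ∑ j, (A x l j).im * ξ l * ξ j ∧
    ∑ l, ∑ j, (A x l j).im * ξ l * ξ j ≤ gam * (lam⁻¹ * (∑ j, ξ j ^ 2))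

/-- `|A(x) − A(y)| ≤ M₀ |x − y|` on `S` (entrywise). -/
def LipCoefOn {m : ℕ} (A : Euc m → Matrix (Fin m) (Fin m) ℂ) (S : Set (Euc m)) (M0 : ℝ) : Prop :=
  ∀ x ∈ S, ∀ y ∈ S, ∀ l j, ‖A x l j - A y l j‖ ≤ M0 * dist x y

/-- The leading coefficient `A = M + iγN` is symmetric, elliptic and Lipschitz on `S`. -/
def GoodCoef {m : ℕ} (A : Euc m → Matrix (Fin m) (Fin m) ℂ) (S : Set (Euc m))
    (lam M0 gam : ℝ) : Prop :=
  MatSymmOn A S ∧ ReElliptic A S lam ∧ ImElliptic A S lam gam ∧ LipCoefOn A S M0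

/-- The (formal) second order operator `div(A ∇u)`. -/
def Lop {m : ℕ} (A : Euc m → Matrix (Fin m) (Fin m) ℂ) (u : Euc m → ℂ) (x : Euc m) : ℂ :=
  ∑ l, pd l (fun y => ∑ j, A y l j * pd j u y) x

/-- `div(A ∇u) + W·∇u + V u`. -/
def LopFull {m : ℕ} (A : Euc m → Matrix (Fin m) (Fin m) ℂ) (W : Euc m → Fin m → ℂ)
    (V : Euc m → ℂ) (u : Euc m → ℂ) (x : Euc m) : ℂ :=
  Lop A u x + (∑ j, W x j * pd j u x) + V x * u x

/-- The weight `φ(x) = α x_n/δ + β x_n²/(2δ²) − |x'|²/(2δ)` (a branch of `φ_δ`). -/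
def wphi {n : ℕ} (α β δ : ℝ) (x : Euc (n+1)) : ℝ :=
  α * xlast x / δ + β * (xlast x) ^ 2 / (2 * δ ^ 2) - ‖low x‖ ^ 2 / (2 * δ)

/-- The squared `H^{1/2}(ℝ^m)` seminorm `[f]²_{1/2}`. -/
def semi2 {m : ℕ} (f : Euc m → ℂ) : ℝ :=
  ∫ x : Euc m, ∫ y : Euc m, ‖f x - f y‖ ^ 2 / dist x y ^ (m + 1)

/-- The transmission datum `h₀ = u₊(·,0) − u₋(·,0)`. -/
def h0fun {n : ℕ} (up um : Euc (n+1) → ℂ) (x' : Euc n) : ℂ :=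
  up (emb x' 0) - um (emb x' 0)

/-- The transmission datum `h₁ = A₊∇u₊·e_n − A₋∇u₋·e_n` at `x_n = 0`. -/
def h1fun {n : ℕ} (Ap Am : Euc (n+1) → Matrix (Fin (n+1)) (Fin (n+1)) ℂ)
    (up um : Euc (n+1) → ℂ) (x' : Euc n) : ℂ :=
  (∑ j, Ap (emb x' 0) (Fin.last n) j * pd j up (emb x' 0)) -
  (∑ j, Am (emb x' 0) (Fin.last n) j * pd j um (emb x' 0))


/-- The flux of the linear current-voltage relation `I(∇u) = (σ + iε)∇u`. -/
def fluxLin {m : ℕ} (σ ε : Euc m → Matrix (Fin m) (Fin m) ℝ) (u : Euc m → ℂ)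
    (x : Euc m) : Fin m → ℂ :=
  fun l => ∑ j, (((σ x l j : ℝ) : ℂ) + Complex.I * ((ε x l j : ℝ) : ℂ)) * pd j u x

/-- The flux of the chiral current-voltage relation
`I(∇u) = (σ + iε)∇u + ζ conj(∇u)`. -/
def fluxChir {m : ℕ} (σ ε ζ : Euc m → Matrix (Fin m) (Fin m) ℝ) (u : Euc m → ℂ)
    (x : Euc m) : Fin m → ℂ :=
  fun l => ∑ j, ((((σ x l j : ℝ) : ℂ) + Complex.I * ((ε x l j : ℝ) : ℂ)) * pd j u x +
    ((ζ x l j : ℝ) : ℂ) * (starRingEnd ℂ) (pd j u x))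

/-- Surface measure on hypersurfaces of `ℝ^m`: `(m-1)`-dimensional Hausdorff measure. -/
def bmeas (m : ℕ) : Measure (Euc m) := MeasureTheory.Measure.hausdorffMeasure ((m : ℝ) - 1)

/-- Weak formulation of the Neumann problem `∇·F = 0` in `Ω`, `F·ν = g` on `∂Ω`. -/
def WeakNeumann {m : ℕ} (Ω : Set (Euc m)) (F : Euc m → Fin m → ℂ) (g : Euc m → ℝ) : Prop :=
  ∀ v : Euc m → ℂ, ContDiff ℝ (⊤ : ℕ∞) v →
    (∫ x in Ω, ∑ l, F x l * pd l v x) = ∫ x in frontier Ω, (g x : ℂ) * v x ∂(bmeas m)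

/-- The power `W = ∫_{∂Ω} u g`. -/
def bpower {m : ℕ} (Ω : Set (Euc m)) (u : Euc m → ℂ) (g : Euc m → ℝ) : ℂ :=
  ∫ x in frontier Ω, u x * (g x : ℂ) ∂(bmeas m)

/-- `σ(x)` is a symmetric matrix with `lam |ξ|² ≤ σ(x)ξ·ξ ≤ lam⁻¹|ξ|²` on `S`. -/
def SymmElliptic {m : ℕ} (σ : Euc m → Matrix (Fin m) (Fin m) ℝ) (S : Set (Euc m))
    (lam : ℝ) : Prop :=
  (∀ x ∈ S, (σ x).IsSymm) ∧
  ∀ x ∈ S, ∀ ξ : Fin m → ℝ,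
    lam * (∑ j, ξ j ^ 2) ≤ (σ x *ᵥ ξ) ⬝ᵥ ξ ∧ (σ x *ᵥ ξ) ⬝ᵥ ξ ≤ lam⁻¹ * (∑ j, ξ j ^ 2)

/-- Entrywise Lipschitz continuity of a real matrix-valued coefficient on `S`. -/
def RealLipOn {m : ℕ} (σ : Euc m → Matrix (Fin m) (Fin m) ℝ) (S : Set (Euc m))
    (M0 : ℝ) : Prop :=
  ∀ x ∈ S, ∀ y ∈ S, ∀ l j, |σ x l j - σ y l j| ≤ M0 * dist x y

/-- The Cherkaev–Gibiansky `2n × 2n` matrix associated with `σ`, `ζ`, `ε`. -/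
def CGmat {m : ℕ} (σ ζ ε : Matrix (Fin m) (Fin m) ℝ) :
    Matrix (Fin m ⊕ Fin m) (Fin m ⊕ Fin m) ℝ :=
  Matrix.fromBlocks ((σ + ζ)⁻¹) ((σ + ζ)⁻¹ * ε) (ε * (σ + ζ)⁻¹)
    (σ - ζ + ε * (σ + ζ)⁻¹ * ε)

/-- The field `v = (Re I(∇u), Im ∇u)ᵗ`. -/
def vfield {m : ℕ} (F : Euc m → Fin m → ℂ) (u : Euc m → ℂ) (x : Euc m) :
    Fin m ⊕ Fin m → ℝ :=
  Sum.elim (fun l => (F x l).re) (fun l => (pd l u x).im)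

/-- The `L²(∂Ω)` norm of a boundary datum. -/
def bL2 {m : ℕ} (Ω : Set (Euc m)) (g : Euc m → ℝ) : ℝ :=
  Real.sqrt (∫ x in frontier Ω, (g x) ^ 2 ∂(bmeas m))

/-- A realization of the `H^{-1/2}(∂Ω)` norm of `g`, by duality with `H¹(Ω)`. -/
def bHm12 {m : ℕ} (Ω : Set (Euc m)) (g : Euc m → ℝ) : ℝ :=
  sSup {r : ℝ | ∃ v : Euc m → ℝ, ContDiff ℝ 1 v ∧
    (∫ x in Ω, ((v x) ^ 2 + ∑ l, (pdR l v x) ^ 2)) ≤ 1 ∧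
    r = |∫ x in frontier Ω, g x * v x ∂(bmeas m)|}

lemma smul_one_posDef' {m : ℕ} {c : ℝ} (hc : 0 < c) :
    (c • (1 : Matrix (Fin m) (Fin m) ℝ)).PosDef := by
  refine Matrix.PosDef.of_dotProduct_mulVec_pos (by simp [Matrix.IsHermitian]) fun x hx => ?_
  have h : (c • (1 : Matrix (Fin m) (Fin m) ℝ)) *ᵥ x = c • x := by
    simp [Matrix.smul_mulVec]
  rw [h]
  simp only [dotProduct_smul, smul_eq_mul, star_trivial]
  have hxx : 0 < x ⬝ᵥ x := by
    simpa using Matrix.dotProduct_star_self_pos_iff.mpr hx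
  positivity

lemma hεsym_aux {m : ℕ} (σ ζ ε : Matrix (Fin m) (Fin m) ℝ) (h : εᵀ = ε) : εᵀ = ε := h

lemma symm_cross' {m : ℕ} (M : Matrix (Fin m) (Fin m) ℝ) (hM : Mᵀ = M)
    (x y : Fin m → ℝ) : (M *ᵥ x) ⬝ᵥ y = x ⬝ᵥ (M *ᵥ y) := by
  rw [dotProduct_comm, Matrix.dotProduct_mulVec, ← Matrix.mulVec_transpose, hM,
    dotProduct_comm]

lemma isHermitian_of_isSymm' {ι : Type*} [Fintype ι] [DecidableEq ι]
    {M : Matrix ι ι ℝ} (h : M.IsSymm) : M.IsHermitian := by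
  rw [Matrix.IsHermitian, Matrix.conjTranspose_eq_transpose_of_trivial]; exact h

/-- Positive definiteness of the Cherkaev–Gibiansky matrix. -/
theorem CG_matrix_posdef (m : ℕ) (lam : ℝ) (hlam0 : 0 < lam) (hlam1 : lam ≤ 1)
    (σ ζ ε : Matrix (Fin m) (Fin m) ℝ)
    (hσ : σ.IsSymm) (hζ : ζ.IsSymm) (hε : ε.IsSymm)
    (h1 : (σ + ζ - lam • (1 : Matrix (Fin m) (Fin m) ℝ)).PosSemidef)
    (h2 : (lam⁻¹ • (1 : Matrix (Fin m) (Fin m) ℝ) - (σ + ζ)).PosSemidef)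
    (h3 : (σ - ζ - lam • (1 : Matrix (Fin m) (Fin m) ℝ)).PosSemidef)
    (h4 : (lam⁻¹ • (1 : Matrix (Fin m) (Fin m) ℝ) - (σ - ζ)).PosSemidef) :
    (CGmat σ ζ ε).IsSymm ∧ (CGmat σ ζ ε).PosDef ∧
    ∀ p q : Fin m → ℝ,
      (CGmat σ ζ ε *ᵥ Sum.elim p q) ⬝ᵥ Sum.elim p q =
        ((σ + ζ)⁻¹ *ᵥ (p + ε *ᵥ q)) ⬝ᵥ (p + ε *ᵥ q) + ((σ - ζ) *ᵥ q) ⬝ᵥ q := by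
  classical
  have hσ' : σᵀ = σ := hσ
  have hζ' : ζᵀ = ζ := hζ
  have hε' : εᵀ = ε := hε
  have hApd : (σ + ζ).PosDef := by
    have h := (smul_one_posDef' (m := m) hlam0).add_posSemidef h1
    simpa using h
  have hCpd : (σ - ζ).PosDef := by
    have h := (smul_one_posDef' (m := m) hlam0).add_posSemidef h3
    simpa using h
  have hAipd : (σ + ζ)⁻¹.PosDef := hApd.inv
  have hAsym : (σ + ζ)ᵀ = σ + ζ := by rw [Matrix.transpose_add, hσ', hζ']
  have hCsym : (σ - ζ)ᵀ = σ - ζ := by rw [Matrix.transpose_sub, hσ', hζ']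
  have hAisym : ((σ + ζ)⁻¹)ᵀ = (σ + ζ)⁻¹ := by
    rw [Matrix.transpose_nonsing_inv, hAsym]
  have hBsym : (CGmat σ ζ ε).IsSymm := by
    show (CGmat σ ζ ε)ᵀ = CGmat σ ζ ε
    rw [CGmat, Matrix.fromBlocks_transpose, Matrix.transpose_mul, Matrix.transpose_mul,
      Matrix.transpose_add, Matrix.transpose_mul, Matrix.transpose_mul,
      hεsym_aux σ ζ ε hε', hAisym, hCsym, ← Matrix.mul_assoc]
  have key : ∀ p q : Fin m → ℝ,
      (CGmat σ ζ ε *ᵥ Sum.elim p q) ⬝ᵥ Sum.elim p q =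
        ((σ + ζ)⁻¹ *ᵥ (p + ε *ᵥ q)) ⬝ᵥ (p + ε *ᵥ q) + ((σ - ζ) *ᵥ q) ⬝ᵥ q := by
    intro p q
    rw [CGmat, Matrix.fromBlocks_mulVec, sumElim_dotProduct_sumElim]
    simp only [Sum.elim_comp_inl, Sum.elim_comp_inr, Matrix.add_mulVec, Matrix.mulVec_add,
      ← Matrix.mulVec_mulVec, add_dotProduct, dotProduct_add]
    have c1 : ((σ + ζ)⁻¹ *ᵥ (ε *ᵥ q)) ⬝ᵥ p = ((σ + ζ)⁻¹ *ᵥ p) ⬝ᵥ (ε *ᵥ q) := by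
      rw [symm_cross' _ hAisym, dotProduct_comm]
    have c2 : (ε *ᵥ ((σ + ζ)⁻¹ *ᵥ p)) ⬝ᵥ q = ((σ + ζ)⁻¹ *ᵥ p) ⬝ᵥ (ε *ᵥ q) :=
      symm_cross' ε hε' _ q
    have c3 : (ε *ᵥ ((σ + ζ)⁻¹ *ᵥ (ε *ᵥ q))) ⬝ᵥ q =
        ((σ + ζ)⁻¹ *ᵥ (ε *ᵥ q)) ⬝ᵥ (ε *ᵥ q) := symm_cross' ε hε' _ q
    rw [c1, c2, c3]
    ring
  refine ⟨hBsym, Matrix.PosDef.of_dotProduct_mulVec_pos (isHermitian_of_isSymm' hBsym) ?_, key⟩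
  intro x hx
  have hx' : x = Sum.elim (x ∘ Sum.inl) (x ∘ Sum.inr) := by
    ext (i | i) <;> rfl
  set p := x ∘ Sum.inl
  set q := x ∘ Sum.inr
  have hquad : x ⬝ᵥ (CGmat σ ζ ε *ᵥ x) =
      ((σ + ζ)⁻¹ *ᵥ (p + ε *ᵥ q)) ⬝ᵥ (p + ε *ᵥ q) + ((σ - ζ) *ᵥ q) ⬝ᵥ q := by
    rw [dotProduct_comm]
    conv_lhs => rw [hx']
    exact key p q
  rw [star_trivial, hquad]
  have h1' : 0 ≤ ((σ + ζ)⁻¹ *ᵥ (p + ε *ᵥ q)) ⬝ᵥ (p + ε *ᵥ q) := by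
    have := hAipd.posSemidef.dotProduct_mulVec_nonneg (p + ε *ᵥ q)
    simpa [dotProduct_comm] using this
  by_cases hq : q = 0
  · have hp : p ≠ 0 := by
      intro hp
      exact hx (by rw [hx', hp, hq]; ext (i | i) <;> rfl)
    have hpos : 0 < ((σ + ζ)⁻¹ *ᵥ (p + ε *ᵥ q)) ⬝ᵥ (p + ε *ᵥ q) := by
      have hv : p + ε *ᵥ q = p := by simp [hq]
      rw [hv]
      have := hAipd.dotProduct_mulVec_pos hp
      simpa [dotProduct_comm] using this
    have h2' : 0 ≤ ((σ - ζ) *ᵥ q) ⬝ᵥ q := by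
      have := hCpd.posSemidef.dotProduct_mulVec_nonneg q
      simpa [dotProduct_comm] using this
    linarith
  · have hpos : 0 < ((σ - ζ) *ᵥ q) ⬝ᵥ q := by
      have := hCpd.dotProduct_mulVec_pos hq
      simpa [dotProduct_comm] using this
    linarith
end
end

section
/- Positive definiteness of the difference of Cherkaev–Gibiansky matrices under the jump condition: Let σ₀, ε₀ and σ₁, ε₁, ζ₁ be real symmetric n×n matrix functions on D satisfying λ₁Id ≤ σ₁ + ζ₁ ≤ λ₁⁻¹Id, λ₁Id ≤ σ₁ − ζ₁ ≤ λ₁⁻¹Id, λ₁Id ≤ σ₀ ≤ λ₁⁻¹Id, ‖ε₀‖_∞, ‖ε₁‖_∞ ≤ λ₁⁻¹, together with the jump condition ζ₁ ≤ (σ₁−σ₀) − ϱId and ζ₁ ≤ (σ₀−σ₁) − ϱId a.e. in D for some ϱ > 0. Then there exists δ > 0, depending on λ₁ and ϱ, such that if ‖ε₁−ε₀‖_{L^∞(D)} ≤ δ, the matrix B₁ − B₀ is positive definite a.e. in D, where B_j = [[(σ_j+ζ_j)⁻¹, (σ_j+ζ_j)⁻¹ε_j], [ε_j(σ_j+ζ_j)⁻¹,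 σ_j−ζ_j+ε_j(σ_j+ζ_j)⁻¹ε_j]] with ζ₀ = 0. (Symmetrically, under the reversed jump condition ζ₁ ≥ (σ₁−σ₀) + ϱId and ζ₁ ≥ (σ₀−σ₁) + ϱId a.e. in D, B₀ − B₁ is positive definite a.e. in D.) -/
open MeasureTheory Metric Set
open scoped Pointwise ENNReal Matrix ComplexConjugate
noncomputable section

namespace CGaux
open Matrix
variable {m : ℕ}
local notation "Mat" => Matrix (Fin m) (Fin m) ℝ


lemma dot_self_nonneg (v : Fin m → ℝ) : 0 ≤ v ⬝ᵥ v :=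
  Finset.sum_nonneg fun i _ => mul_self_nonneg (v i)
lemma dot_self_pos {v : Fin m → ℝ} (hv : v ≠ 0) : 0 < v ⬝ᵥ v :=
  lt_of_le_of_ne (dot_self_nonneg v) fun h => hv (dotProduct_self_eq_zero.mp h.symm)
lemma cs_dot (u v : Fin m → ℝ) : (u ⬝ᵥ v) ^ 2 ≤ (u ⬝ᵥ u) * (v ⬝ᵥ v) := by
  have := Finset.sum_mul_sq_le_sq_mul_sq Finset.univ u v
  simpa [dotProduct, pow_two] using this
lemma symm_dot {N : Mat} (hN : Nᵀ = N) (x y : Fin m → ℝ) :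
    x ⬝ᵥ (N *ᵥ y) = (N *ᵥ x) ⬝ᵥ y := by
  rw [Matrix.dotProduct_mulVec, ← Matrix.vecMul_transpose, hN]
lemma qf_nonneg {M : Mat} (h : M.PosSemidef) (v : Fin m → ℝ) :
    0 ≤ v ⬝ᵥ (M *ᵥ v) := by simpa using h.dotProduct_mulVec_nonneg v
lemma isHermitian_of_transpose {ι : Type*} [Fintype ι] {M : Matrix ι ι ℝ} (h : Mᵀ = M) :
    M.IsHermitian := by
  rw [Matrix.IsHermitian, Matrix.conjTranspose_eq_transpose_of_trivial, h]
lemma posdef_of_lb {lam : ℝ} (hlam : 0 < lam) {M : Mat} (hsym : Mᵀ = M)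
    (hlb : ∀ v, lam * (v ⬝ᵥ v) ≤ v ⬝ᵥ (M *ᵥ v)) : M.PosDef := by
  refine Matrix.PosDef.of_dotProduct_mulVec_pos (isHermitian_of_transpose hsym) fun v hv => ?_
  have h1 : 0 < lam * (v ⬝ᵥ v) := mul_pos hlam (dot_self_pos hv)
  have := hlb v
  simp only [star_trivial]
  linarith
lemma inv_mulVec_cancel {M : Mat} (h : M.PosDef) (x : Fin m → ℝ) :
    M *ᵥ (M⁻¹ *ᵥ x) = x := by
  rw [Matrix.mulVec_mulVec, Matrix.mul_nonsing_inv _ (h.isUnit.map (Matrix.detMonoidHom)),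
    Matrix.one_mulVec]
lemma inv_transpose {M : Mat} (hsym : Mᵀ = M) : (M⁻¹)ᵀ = M⁻¹ := by
  rw [Matrix.transpose_nonsing_inv, hsym]

/-- Legendre / completion of square: `2 x·y − y·My ≤ x·M⁻¹x`. -/
lemma legendre {M : Mat} (hsym : Mᵀ = M) (hpd : M.PosDef) (x y : Fin m → ℝ) :
    2 * (x ⬝ᵥ y) - y ⬝ᵥ (M *ᵥ y) ≤ x ⬝ᵥ (M⁻¹ *ᵥ x) := by
  set y' := M⁻¹ *ᵥ x with hy'
  have h0 : 0 ≤ (y - y') ⬝ᵥ (M *ᵥ (y - y')) := qf_nonneg hpd.posSemidef _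
  have hMy' : M *ᵥ y' = x := inv_mulVec_cancel hpd x
  have h1 : y' ⬝ᵥ (M *ᵥ y) = x ⬝ᵥ y := by
    rw [symm_dot hsym, hMy']
  have h2 : y' ⬝ᵥ x = x ⬝ᵥ (M⁻¹ *ᵥ x) := by
    rw [dotProduct_comm]
  have h3 : y ⬝ᵥ x = x ⬝ᵥ y := dotProduct_comm _ _
  rw [Matrix.mulVec_sub, sub_dotProduct, dotProduct_sub, dotProduct_sub, hMy'] at h0
  linarith [h0, h1, h2, h3]

/-- `‖M⁻¹ x‖ ≤ lam⁻¹ ‖x‖` in multiplicative form. -/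
lemma inv_norm_bound {lam : ℝ} (hlam : 0 < lam) {M : Mat} (hsym : Mᵀ = M)
    (hlb : ∀ v, lam * (v ⬝ᵥ v) ≤ v ⬝ᵥ (M *ᵥ v)) (x : Fin m → ℝ) :
    lam * lam * ((M⁻¹ *ᵥ x) ⬝ᵥ (M⁻¹ *ᵥ x)) ≤ x ⬝ᵥ x := by
  have hpd : M.PosDef := posdef_of_lb hlam hsym hlb
  set y := M⁻¹ *ᵥ x with hy
  have hMy : M *ᵥ y = x := inv_mulVec_cancel hpd x
  have h1 : lam * (y ⬝ᵥ y) ≤ y ⬝ᵥ x := by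
    have := hlb y; rw [hMy] at this; exact this
  have h2 : (y ⬝ᵥ x) ^ 2 ≤ (y ⬝ᵥ y) * (x ⬝ᵥ x) := cs_dot y x
  have hyy : 0 ≤ y ⬝ᵥ y := dot_self_nonneg y
  have hxx : 0 ≤ x ⬝ᵥ x := dot_self_nonneg x
  have hyx : 0 ≤ y ⬝ᵥ x := le_trans (by positivity) h1
  have h4 : (lam * (y ⬝ᵥ y)) ^ 2 ≤ (y ⬝ᵥ x) ^ 2 := pow_le_pow_left₀ (by positivity) h1 2
  rcases eq_or_lt_of_le hyy with h | h
  · rw [← h]; nlinarith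
  · nlinarith [h2, h4, h]

/-- lower bound for the inverse quadratic form. -/
lemma inv_lb {lam : ℝ} (hlam : 0 < lam) {M : Mat} (hsym : Mᵀ = M)
    (hlb : ∀ v, lam * (v ⬝ᵥ v) ≤ v ⬝ᵥ (M *ᵥ v))
    (hub : ∀ v, lam * (v ⬝ᵥ (M *ᵥ v)) ≤ v ⬝ᵥ v) (v : Fin m → ℝ) :
    lam * (v ⬝ᵥ v) ≤ v ⬝ᵥ (M⁻¹ *ᵥ v) := by
  have hpd : M.PosDef := posdef_of_lb hlam hsym hlb
  have hleg := legendre hsym hpd v (lam • v)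
  have h1 : v ⬝ᵥ (lam • v) = lam * (v ⬝ᵥ v) := by
    rw [dotProduct_smul]; simp [smul_eq_mul]
  have h2 : (lam • v) ⬝ᵥ (M *ᵥ (lam • v)) = lam * lam * (v ⬝ᵥ (M *ᵥ v)) := by
    rw [Matrix.mulVec_smul, smul_dotProduct, dotProduct_smul]; simp [smul_eq_mul]; ring
  have h3 := hub v
  rw [h1, h2] at hleg
  nlinarith [hlb v, hleg]

/-- `‖M x‖ ≥ lam ‖x‖` : lower norm bound via the inverse. -/
lemma inv_norm_lower {lam : ℝ} (hlam : 0 < lam) {M : Mat} (hsym : Mᵀ = M)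
    (hlb : ∀ v, lam * (v ⬝ᵥ v) ≤ v ⬝ᵥ (M *ᵥ v))
    (hub : ∀ v, lam * (v ⬝ᵥ (M *ᵥ v)) ≤ v ⬝ᵥ v) (x : Fin m → ℝ) :
    lam * lam * (x ⬝ᵥ x) ≤ (M⁻¹ *ᵥ x) ⬝ᵥ (M⁻¹ *ᵥ x) := by
  have hpd : M.PosDef := posdef_of_lb hlam hsym hlb
  have hinvsym : (M⁻¹)ᵀ = M⁻¹ := inv_transpose hsym
  have hinv : ∀ v, lam * (v ⬝ᵥ v) ≤ v ⬝ᵥ (M⁻¹ *ᵥ v) := inv_lb hlam hsym hlb hub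
  have h := inv_norm_bound hlam hinvsym hinv (M⁻¹ *ᵥ x)
  rwa [Matrix.nonsing_inv_nonsing_inv _ (hpd.isUnit.map (Matrix.detMonoidHom)),
    inv_mulVec_cancel hpd] at h

/-- Inverse difference lower bound: if `B − A ≥ ϱ` then
`x·A⁻¹x − x·B⁻¹x ≥ ϱ lam² x·x`. -/
lemma inv_diff {lam ϱ : ℝ} (hlam : 0 < lam) (hϱ : 0 < ϱ) {A B : Mat}
    (hAsym : Aᵀ = A) (hBsym : Bᵀ = B)
    (hAlb : ∀ v, lam * (v ⬝ᵥ v) ≤ v ⬝ᵥ (A *ᵥ v))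
    (hBlb : ∀ v, lam * (v ⬝ᵥ v) ≤ v ⬝ᵥ (B *ᵥ v))
    (hBub : ∀ v, lam * (v ⬝ᵥ (B *ᵥ v)) ≤ v ⬝ᵥ v)
    (hBA : ∀ v, ϱ * (v ⬝ᵥ v) ≤ v ⬝ᵥ ((B - A) *ᵥ v)) (x : Fin m → ℝ) :
    ϱ * (lam * lam) * (x ⬝ᵥ x) ≤ x ⬝ᵥ (A⁻¹ *ᵥ x) - x ⬝ᵥ (B⁻¹ *ᵥ x) := by
  have hApd : A.PosDef := posdef_of_lb hlam hAsym hAlb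
  have hBpd : B.PosDef := posdef_of_lb hlam hBsym hBlb
  set y := B⁻¹ *ᵥ x with hy
  have hBy : B *ᵥ y = x := inv_mulVec_cancel hBpd x
  have hleg := legendre hAsym hApd x y
  have hxy : x ⬝ᵥ (B⁻¹ *ᵥ x) = x ⬝ᵥ y := rfl
  have hyx : y ⬝ᵥ x = x ⬝ᵥ y := dotProduct_comm _ _
  have hyBy : y ⬝ᵥ (B *ᵥ y) = x ⬝ᵥ y := by rw [hBy, hyx]
  have hdiff := hBA y
  rw [Matrix.sub_mulVec, dotProduct_sub] at hdiff
  have hyy := inv_norm_lower hlam hBsym hBlb hBub x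
  nlinarith [hleg, hdiff, hyy, hyBy]

/-- elementary AM-GM step. -/
lemma amgm {a P R K L : ℝ} (hP : 0 ≤ P) (hR : 0 ≤ R) (hK : 0 ≤ K) (hL : 0 ≤ L)
    (h : a ^ 2 ≤ K * L * (P * R)) : 2 * a ≤ K * P + L * R := by
  have h1 : 0 ≤ K * P + L * R := by positivity
  rcases le_or_gt (2 * a) 0 with h2 | h2
  · linarith
  · nlinarith [sq_nonneg (K * P - L * R)]

/-- entrywise bound gives `‖d η‖² ≤ m² δ² ‖η‖²`. -/
lemma entry_bound {δ : ℝ} (hδ : 0 ≤ δ) {d : Mat} (hd : ∀ l j, |d l j| ≤ δ)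
    (η : Fin m → ℝ) :
    (d *ᵥ η) ⬝ᵥ (d *ᵥ η) ≤ (m : ℝ) * (m : ℝ) * (δ * δ) * (η ⬝ᵥ η) := by
  have hrow : ∀ l : Fin m, ((d *ᵥ η) l) * ((d *ᵥ η) l) ≤ (m : ℝ) * (δ * δ) * (η ⬝ᵥ η) := by
    intro l
    have hcs : (d l ⬝ᵥ η) ^ 2 ≤ (d l ⬝ᵥ d l) * (η ⬝ᵥ η) := cs_dot (d l) η
    have hde : d l ⬝ᵥ d l ≤ (m : ℝ) * (δ * δ) := by
      have : ∀ j : Fin m, d l j * d l j ≤ δ * δ := by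
        intro j
        have := hd l j
        nlinarith [abs_nonneg (d l j), sq_abs (d l j), this]
      calc d l ⬝ᵥ d l ≤ ∑ _j : Fin m, δ * δ := Finset.sum_le_sum fun j _ => this j
        _ = (m : ℝ) * (δ * δ) := by simp [Finset.sum_const, mul_comm]
    have hη : 0 ≤ η ⬝ᵥ η := dot_self_nonneg η
    have : (d *ᵥ η) l = d l ⬝ᵥ η := rfl
    rw [this]
    nlinarith [hcs, mul_le_mul_of_nonneg_right hde hη]
  calc (d *ᵥ η) ⬝ᵥ (d *ᵥ η) = ∑ l, ((d *ᵥ η) l) * ((d *ᵥ η) l) := rfl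
    _ ≤ ∑ _l : Fin m, (m : ℝ) * (δ * δ) * (η ⬝ᵥ η) := Finset.sum_le_sum fun l _ => hrow l
    _ = (m : ℝ) * (m : ℝ) * (δ * δ) * (η ⬝ᵥ η) := by
        simp [Finset.sum_const]; ring

set_option maxHeartbeats 1000000 in
/-- The key pointwise quadratic form inequality. -/
lemma key {lam ϱ δ : ℝ} (hlam0 : 0 < lam) (hϱ : 0 < ϱ) (hδ : 0 ≤ δ)
    (hmδ : 2 * (m : ℝ) * δ ≤ ϱ * (lam * lam))
    {A B C1 C0 ea eb : Mat}
    (hAsym : Aᵀ = A) (hBsym : Bᵀ = B)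
    (hAlb : ∀ v, lam * (v ⬝ᵥ v) ≤ v ⬝ᵥ (A *ᵥ v))
    (hBlb : ∀ v, lam * (v ⬝ᵥ v) ≤ v ⬝ᵥ (B *ᵥ v))
    (hBub : ∀ v, lam * (v ⬝ᵥ (B *ᵥ v)) ≤ v ⬝ᵥ v)
    (hBA : ∀ v, ϱ * (v ⬝ᵥ v) ≤ v ⬝ᵥ ((B - A) *ᵥ v))
    (hC : ∀ v, ϱ * (v ⬝ᵥ v) ≤ v ⬝ᵥ ((C1 - C0) *ᵥ v))
    (hee : ∀ l j, |(ea - eb) l j| ≤ δ)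
    (ξ η : Fin m → ℝ) (hne : ξ ≠ 0 ∨ η ≠ 0) :
    0 < (ξ + ea *ᵥ η) ⬝ᵥ (A⁻¹ *ᵥ (ξ + ea *ᵥ η)) + η ⬝ᵥ (C1 *ᵥ η)
      - ((ξ + eb *ᵥ η) ⬝ᵥ (B⁻¹ *ᵥ (ξ + eb *ᵥ η)) + η ⬝ᵥ (C0 *ᵥ η)) := by
  have hApd : A.PosDef := posdef_of_lb hlam0 hAsym hAlb
  set u : Fin m → ℝ := ξ + eb *ᵥ η with hu
  set e : Fin m → ℝ := (ea - eb) *ᵥ η with he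
  have hue : ξ + ea *ᵥ η = u + e := by
    rw [hu, he, Matrix.sub_mulVec]; abel
  set P : ℝ := u ⬝ᵥ u with hP'
  set R : ℝ := η ⬝ᵥ η with hR'
  set Z : ℝ := u ⬝ᵥ (A⁻¹ *ᵥ e) with hZ'
  have hP : 0 ≤ P := dot_self_nonneg u
  have hR : 0 ≤ R := dot_self_nonneg η
  -- expansion of the first quadratic form
  have hcross : e ⬝ᵥ (A⁻¹ *ᵥ u) = Z := by
    rw [symm_dot (inv_transpose hAsym) e u, dotProduct_comm]
  have hexp : (ξ + ea *ᵥ η) ⬝ᵥ (A⁻¹ *ᵥ (ξ + ea *ᵥ η)) =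
      u ⬝ᵥ (A⁻¹ *ᵥ u) + 2 * Z + e ⬝ᵥ (A⁻¹ *ᵥ e) := by
    rw [hue, Matrix.mulVec_add, add_dotProduct, dotProduct_add, dotProduct_add, hcross]
    ring
  -- main difference bound
  have hdiff := inv_diff hlam0 hϱ hAsym hBsym hAlb hBlb hBub hBA u
  -- C difference
  have hCd := hC η
  rw [Matrix.sub_mulVec, dotProduct_sub] at hCd
  -- e ⬝ A⁻¹ e ≥ 0
  have heA : 0 ≤ e ⬝ᵥ (A⁻¹ *ᵥ e) := qf_nonneg hApd.inv.posSemidef e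
  -- bound on Z
  have hZ1 : Z ^ 2 ≤ P * ((A⁻¹ *ᵥ e) ⬝ᵥ (A⁻¹ *ᵥ e)) := cs_dot u (A⁻¹ *ᵥ e)
  have hZ2 : lam * lam * ((A⁻¹ *ᵥ e) ⬝ᵥ (A⁻¹ *ᵥ e)) ≤ e ⬝ᵥ e :=
    inv_norm_bound hlam0 hAsym hAlb e
  have hZ3 : e ⬝ᵥ e ≤ (m : ℝ) * (m : ℝ) * (δ * δ) * R := entry_bound hδ hee η
  have hm0 : (0 : ℝ) ≤ 2 * (m : ℝ) * δ := by positivity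
  have e5 : 4 * ((m : ℝ) * (m : ℝ) * (δ * δ)) ≤ ϱ * ϱ * (lam * lam) * (lam * lam) := by
    nlinarith [mul_self_le_mul_self hm0 hmδ]
  have hw : 0 ≤ (A⁻¹ *ᵥ e) ⬝ᵥ (A⁻¹ *ᵥ e) := dot_self_nonneg _
  have hZ4 : Z ^ 2 ≤ (ϱ * (lam * lam) / 2) * (ϱ / 2) * (P * R) := by
    have c1 : lam * lam * Z ^ 2 ≤ lam * lam * (P * ((A⁻¹ *ᵥ e) ⬝ᵥ (A⁻¹ *ᵥ e))) :=
      mul_le_mul_of_nonneg_left hZ1 (by positivity)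
    have c2 : P * (lam * lam * ((A⁻¹ *ᵥ e) ⬝ᵥ (A⁻¹ *ᵥ e))) ≤ P * (e ⬝ᵥ e) :=
      mul_le_mul_of_nonneg_left hZ2 hP
    have c3 : P * (e ⬝ᵥ e) ≤ P * ((m : ℝ) * (m : ℝ) * (δ * δ) * R) :=
      mul_le_mul_of_nonneg_left hZ3 hP
    have hPR : 0 ≤ P * R := mul_nonneg hP hR
    have c4 : P * ((m : ℝ) * (m : ℝ) * (δ * δ) * R) ≤
        lam * lam * ((ϱ * (lam * lam) / 2) * (ϱ / 2) * (P * R)) := by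
      nlinarith [mul_le_mul_of_nonneg_right e5 hPR]
    have c5 : lam * lam * Z ^ 2 ≤
        lam * lam * ((ϱ * (lam * lam) / 2) * (ϱ / 2) * (P * R)) := by nlinarith
    exact le_of_mul_le_mul_left c5 (by positivity)
  have hamgm : 2 * (-Z) ≤ (ϱ * (lam * lam) / 2) * P + (ϱ / 2) * R :=
    amgm hP hR (by positivity) (by positivity) ((neg_sq Z) ▸ hZ4)
  -- positivity of P or R
  have hpos : 0 < (ϱ * (lam * lam) / 2) * P + (ϱ / 2) * R := by
    rcases eq_or_ne η 0 with hη | hη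
    · have hξ : ξ ≠ 0 := by
        rcases hne with h | h
        · exact h
        · exact absurd hη h
      have : u = ξ := by rw [hu, hη, Matrix.mulVec_zero, add_zero]
      have hPpos : 0 < P := by rw [hP', this]; exact dot_self_pos hξ
      have : 0 ≤ (ϱ / 2) * R := by positivity
      nlinarith [mul_pos (show (0:ℝ) < ϱ * (lam * lam) / 2 by positivity) hPpos]
    · have hRpos : 0 < R := dot_self_pos hη
      have : 0 ≤ (ϱ * (lam * lam) / 2) * P := by positivity
      nlinarith [mul_pos (show (0:ℝ) < ϱ / 2 by positivity) hRpos]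
  rw [hexp]
  nlinarith [hdiff, hCd, heA, hamgm, hpos]


lemma cg_transpose {σ ζ ε : Mat} (hσ : σᵀ = σ) (hζ : ζᵀ = ζ) (hε : εᵀ = ε) :
    (CGmat σ ζ ε)ᵀ = CGmat σ ζ ε := by
  have hS : (σ + ζ)ᵀ = σ + ζ := by rw [Matrix.transpose_add, hσ, hζ]
  unfold CGmat
  rw [Matrix.fromBlocks_transpose]
  simp only [Matrix.transpose_add, Matrix.transpose_sub, Matrix.transpose_mul,
    inv_transpose hS, hσ, hζ, hε, Matrix.mul_assoc]

lemma cg_qf {σ ζ ε : Mat} (hε : εᵀ = ε)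
    (x : Fin m ⊕ Fin m → ℝ) :
    x ⬝ᵥ (CGmat σ ζ ε *ᵥ x) =
      ((x ∘ Sum.inl) + ε *ᵥ (x ∘ Sum.inr)) ⬝ᵥ
        ((σ + ζ)⁻¹ *ᵥ ((x ∘ Sum.inl) + ε *ᵥ (x ∘ Sum.inr)))
      + (x ∘ Sum.inr) ⬝ᵥ ((σ - ζ) *ᵥ (x ∘ Sum.inr)) := by
  set ξ : Fin m → ℝ := x ∘ Sum.inl with hξ
  set η : Fin m → ℝ := x ∘ Sum.inr with hη
  have hx : x = Sum.elim ξ η := by funext i; cases i <;> rfl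
  rw [hx]
  unfold CGmat
  rw [Matrix.fromBlocks_mulVec, sumElim_dotProduct_sumElim]
  simp only [Sum.elim_comp_inl, Sum.elim_comp_inr, Matrix.add_mulVec,
    ← Matrix.mulVec_mulVec, dotProduct_add, add_dotProduct, Matrix.mulVec_add]
  rw [symm_dot hε η ((σ + ζ)⁻¹ *ᵥ ξ), symm_dot hε η ((σ + ζ)⁻¹ *ᵥ (ε *ᵥ η))]
  ring


lemma lb_of_psd {W : Mat} {c : ℝ} (h : (W - c • (1 : Mat)).PosSemidef) (v : Fin m → ℝ) :
    c * (v ⬝ᵥ v) ≤ v ⬝ᵥ (W *ᵥ v) := by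
  have h0 := qf_nonneg h v
  rw [Matrix.sub_mulVec, dotProduct_sub, Matrix.smul_mulVec, Matrix.one_mulVec,
    dotProduct_smul, smul_eq_mul] at h0
  linarith

lemma ub_of_psd {W : Mat} {c : ℝ} (h : (c • (1 : Mat) - W).PosSemidef) (v : Fin m → ℝ) :
    v ⬝ᵥ (W *ᵥ v) ≤ c * (v ⬝ᵥ v) := by
  have h0 := qf_nonneg h v
  rw [Matrix.sub_mulVec, dotProduct_sub, Matrix.smul_mulVec, Matrix.one_mulVec,
    dotProduct_smul, smul_eq_mul] at h0
  linarith

lemma ub_mult {W : Mat} {lam : ℝ} (hlam : 0 < lam)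
    (h : (lam⁻¹ • (1 : Mat) - W).PosSemidef) (v : Fin m → ℝ) :
    lam * (v ⬝ᵥ (W *ᵥ v)) ≤ v ⬝ᵥ v := by
  have h1 := ub_of_psd h v
  have h2 := mul_le_mul_of_nonneg_left h1 hlam.le
  rwa [← mul_assoc, mul_inv_cancel₀ hlam.ne', one_mul] at h2

end CGaux

/-- Positive definiteness of the difference of Cherkaev–Gibiansky matrices under
the jump condition (pointwise version of the a.e. statement). -/
theorem CG_difference_posdef (m : ℕ) (lam ϱ : ℝ)
    (hlam0 : 0 < lam) (hlam1 : lam ≤ 1) (hϱ : 0 < ϱ) :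
    ∃ δ : ℝ, 0 < δ ∧
      ∀ (D : Set (Euc m)) (σ0 ε0 σ1 ε1 ζ1 : Euc m → Matrix (Fin m) (Fin m) ℝ),
        (∀ x ∈ D, (σ0 x).IsSymm ∧ (ε0 x).IsSymm ∧ (σ1 x).IsSymm ∧ (ε1 x).IsSymm ∧
          (ζ1 x).IsSymm) →
        (∀ x ∈ D,
          (σ1 x + ζ1 x - lam • (1 : Matrix (Fin m) (Fin m) ℝ)).PosSemidef ∧
          (lam⁻¹ • (1 : Matrix (Fin m) (Fin m) ℝ) - (σ1 x + ζ1 x)).PosSemidef ∧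
          (σ1 x - ζ1 x - lam • (1 : Matrix (Fin m) (Fin m) ℝ)).PosSemidef ∧
          (lam⁻¹ • (1 : Matrix (Fin m) (Fin m) ℝ) - (σ1 x - ζ1 x)).PosSemidef ∧
          (σ0 x - lam • (1 : Matrix (Fin m) (Fin m) ℝ)).PosSemidef ∧
          (lam⁻¹ • (1 : Matrix (Fin m) (Fin m) ℝ) - σ0 x).PosSemidef ∧
          (lam⁻¹ • (1 : Matrix (Fin m) (Fin m) ℝ) - ε0 x).PosSemidef ∧
          (ε0 x + lam⁻¹ • (1 : Matrix (Fin m) (Fin m) ℝ)).PosSemidef ∧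
          (lam⁻¹ • (1 : Matrix (Fin m) (Fin m) ℝ) - ε1 x).PosSemidef ∧
          (ε1 x + lam⁻¹ • (1 : Matrix (Fin m) (Fin m) ℝ)).PosSemidef) →
        -- smallness `‖ε₁ − ε₀‖_{L^∞(D)} ≤ δ`
        (∀ x ∈ D, ∀ l j, |ε1 x l j - ε0 x l j| ≤ δ) →
        -- under jump condition (i), `B₁ − B₀` is positive definite on `D`
        ((∀ x ∈ D,
            (σ1 x - σ0 x - ϱ • (1 : Matrix (Fin m) (Fin m) ℝ) - ζ1 x).PosSemidef ∧
            (σ0 x - σ1 x - ϱ • (1 : Matrix (Fin m) (Fin m) ℝ) - ζ1 x).PosSemidef) →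
          ∀ x ∈ D, (CGmat (σ1 x) (ζ1 x) (ε1 x) - CGmat (σ0 x) 0 (ε0 x)).PosDef) ∧
        -- under jump condition (ii), `B₀ − B₁` is positive definite on `D`
        ((∀ x ∈ D,
            (ζ1 x - (σ1 x - σ0 x) - ϱ • (1 : Matrix (Fin m) (Fin m) ℝ)).PosSemidef ∧
            (ζ1 x - (σ0 x - σ1 x) - ϱ • (1 : Matrix (Fin m) (Fin m) ℝ)).PosSemidef) →
          ∀ x ∈ D, (CGmat (σ0 x) 0 (ε0 x) - CGmat (σ1 x) (ζ1 x) (ε1 x)).PosDef) := by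
  classical
  refine ⟨lam * lam * ϱ / (2 * (m : ℝ) + 2), by positivity, ?_⟩
  intro D σ0 ε0 σ1 ε1 ζ1 hsym hell hsmall
  set δ : ℝ := lam * lam * ϱ / (2 * (m : ℝ) + 2) with hδdef
  have hδ0 : (0 : ℝ) ≤ δ := by positivity
  have hmδ : 2 * (m : ℝ) * δ ≤ ϱ * (lam * lam) := by
    have hpos : (0 : ℝ) < 2 * (m : ℝ) + 2 := by positivity
    have h1 : 2 * (m : ℝ) * δ = lam * lam * ϱ * (2 * (m : ℝ) / (2 * (m : ℝ) + 2)) := by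
      rw [hδdef]; ring
    have h2 : 2 * (m : ℝ) / (2 * (m : ℝ) + 2) ≤ 1 := by
      rw [div_le_one hpos]; linarith
    calc 2 * (m : ℝ) * δ = lam * lam * ϱ * (2 * (m : ℝ) / (2 * (m : ℝ) + 2)) := h1
      _ ≤ lam * lam * ϱ * 1 := mul_le_mul_of_nonneg_left h2 (by positivity)
      _ = ϱ * (lam * lam) := by ring
  constructor
  · -- jump condition (i)
    intro hjump x hx
    obtain ⟨hσ0s, hε0s, hσ1s, hε1s, hζ1s⟩ := hsym x hx
    obtain ⟨e1, e2, e3, e4, e5, e6, _, _, _, _⟩ := hell x hx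
    obtain ⟨j1, j2⟩ := hjump x hx
    have hσ0t : (σ0 x)ᵀ = σ0 x := hσ0s
    have hε0t : (ε0 x)ᵀ = ε0 x := hε0s
    have hσ1t : (σ1 x)ᵀ = σ1 x := hσ1s
    have hε1t : (ε1 x)ᵀ = ε1 x := hε1s
    have hζ1t : (ζ1 x)ᵀ = ζ1 x := hζ1s
    have hAsym : (σ1 x + ζ1 x)ᵀ = σ1 x + ζ1 x := by
      rw [Matrix.transpose_add, hσ1t, hζ1t]
    have hAlb := CGaux.lb_of_psd e1
    have hBlb := CGaux.lb_of_psd e5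
    have hBub := CGaux.ub_mult hlam0 e6
    have hBA : ∀ v, ϱ * (v ⬝ᵥ v) ≤ v ⬝ᵥ ((σ0 x - (σ1 x + ζ1 x)) *ᵥ v) := by
      have hid : σ0 x - (σ1 x + ζ1 x) - ϱ • (1 : Matrix (Fin m) (Fin m) ℝ) =
          σ0 x - σ1 x - ϱ • (1 : Matrix (Fin m) (Fin m) ℝ) - ζ1 x := by abel
      exact CGaux.lb_of_psd (hid ▸ j2)
    have hC : ∀ v, ϱ * (v ⬝ᵥ v) ≤ v ⬝ᵥ ((σ1 x - ζ1 x - σ0 x) *ᵥ v) := by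
      have hid : σ1 x - ζ1 x - σ0 x - ϱ • (1 : Matrix (Fin m) (Fin m) ℝ) =
          σ1 x - σ0 x - ϱ • (1 : Matrix (Fin m) (Fin m) ℝ) - ζ1 x := by abel
      exact CGaux.lb_of_psd (hid ▸ j1)
    have hee : ∀ l j, |(ε1 x - ε0 x) l j| ≤ δ := by
      intro l j
      simpa [Matrix.sub_apply] using hsmall x hx l j
    refine Matrix.PosDef.of_dotProduct_mulVec_pos ?_ fun v hv => ?_
    · refine CGaux.isHermitian_of_transpose ?_
      rw [Matrix.transpose_sub, CGaux.cg_transpose hσ1t hζ1t hε1t,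
        CGaux.cg_transpose hσ0t Matrix.transpose_zero hε0t]
    · have hne : (v ∘ Sum.inl) ≠ 0 ∨ (v ∘ Sum.inr) ≠ 0 := by
        by_contra hcon
        push_neg at hcon
        obtain ⟨h1, h2⟩ := hcon
        apply hv
        funext i
        cases i with
        | inl j => exact congrFun h1 j
        | inr j => exact congrFun h2 j
      have hkey := CGaux.key hlam0 hϱ hδ0 hmδ hAsym hσ0t hAlb hBlb hBub hBA hC hee
        (v ∘ Sum.inl) (v ∘ Sum.inr) hne
      simp only [star_trivial]
      rw [Matrix.sub_mulVec, dotProduct_sub, CGaux.cg_qf hε1t v, CGaux.cg_qf hε0t v]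
      simpa [add_zero, sub_zero] using hkey
  · -- jump condition (ii)
    intro hjump x hx
    obtain ⟨hσ0s, hε0s, hσ1s, hε1s, hζ1s⟩ := hsym x hx
    obtain ⟨e1, e2, e3, e4, e5, e6, _, _, _, _⟩ := hell x hx
    obtain ⟨j1, j2⟩ := hjump x hx
    have hσ0t : (σ0 x)ᵀ = σ0 x := hσ0s
    have hε0t : (ε0 x)ᵀ = ε0 x := hε0s
    have hσ1t : (σ1 x)ᵀ = σ1 x := hσ1s
    have hε1t : (ε1 x)ᵀ = ε1 x := hε1s
    have hζ1t : (ζ1 x)ᵀ = ζ1 x := hζ1s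
    have hBsym : (σ1 x + ζ1 x)ᵀ = σ1 x + ζ1 x := by
      rw [Matrix.transpose_add, hσ1t, hζ1t]
    have hAlb := CGaux.lb_of_psd e5
    have hBlb := CGaux.lb_of_psd e1
    have hBub := CGaux.ub_mult hlam0 e2
    have hBA : ∀ v, ϱ * (v ⬝ᵥ v) ≤ v ⬝ᵥ ((σ1 x + ζ1 x - σ0 x) *ᵥ v) := by
      have hid : σ1 x + ζ1 x - σ0 x - ϱ • (1 : Matrix (Fin m) (Fin m) ℝ) =
          ζ1 x - (σ0 x - σ1 x) - ϱ • (1 : Matrix (Fin m) (Fin m) ℝ) := by abel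
      exact CGaux.lb_of_psd (hid ▸ j2)
    have hC : ∀ v, ϱ * (v ⬝ᵥ v) ≤ v ⬝ᵥ ((σ0 x - (σ1 x - ζ1 x)) *ᵥ v) := by
      have hid : σ0 x - (σ1 x - ζ1 x) - ϱ • (1 : Matrix (Fin m) (Fin m) ℝ) =
          ζ1 x - (σ1 x - σ0 x) - ϱ • (1 : Matrix (Fin m) (Fin m) ℝ) := by abel
      exact CGaux.lb_of_psd (hid ▸ j1)
    have hee : ∀ l j, |(ε0 x - ε1 x) l j| ≤ δ := by
      intro l j
      rw [Matrix.sub_apply, abs_sub_comm]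
      exact hsmall x hx l j
    refine Matrix.PosDef.of_dotProduct_mulVec_pos ?_ fun v hv => ?_
    · refine CGaux.isHermitian_of_transpose ?_
      rw [Matrix.transpose_sub, CGaux.cg_transpose hσ1t hζ1t hε1t,
        CGaux.cg_transpose hσ0t Matrix.transpose_zero hε0t]
    · have hne : (v ∘ Sum.inl) ≠ 0 ∨ (v ∘ Sum.inr) ≠ 0 := by
        by_contra hcon
        push_neg at hcon
        obtain ⟨h1, h2⟩ := hcon
        apply hv
        funext i
        cases i with
        | inl j => exact congrFun h1 j
        | inr j => exact congrFun h2 j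
      have hkey := CGaux.key hlam0 hϱ hδ0 hmδ hσ0t hBsym hAlb hBlb hBub hBA hC hee
        (v ∘ Sum.inl) (v ∘ Sum.inr) hne
      simp only [star_trivial]
      rw [Matrix.sub_mulVec, dotProduct_sub, CGaux.cg_qf hε1t v, CGaux.cg_qf hε0t v]
      simpa [add_zero, sub_zero] using hkey
end
end
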